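/- arXiv:2110.07755 — 4 statements merged into one kernel-verified Lean document; each statement's English description precedes it below -/
import Mathlib

section
/- If 0 ≤ x_i^1 ≤ 1 for all i, h·δ_i ≤ 1 and h·∑_j β_{ij} < 1 for all i (with β_{ij}, δ_i ≥ 0), then the discrete-time SIS dynamics x_i^{k+1} = x_i^k + h(1 - x_i^k)·∑_j β_{ij} x_j^k - h·δ_i x_i^k satisfy 0 ≤ x_i^k ≤ 1 for all i and all k ≥ 1. -/
open Finset Set

lemma sum_mul_mem_Icc_of_mem_unitInterval {ι : Type*} (s : Finset ι) {w x : ι → ℝ}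
    (hw : ∀ j ∈ s, 0 ≤ w j) (hx : ∀ j ∈ s, x j ∈ Icc (0 : ℝ) 1) :
    ∑ j ∈ s, w j * x j ∈ Icc 0 (∑ j ∈ s, w j) :=
  ⟨sum_nonneg fun j hj => mul_nonneg (hw j hj) (hx j hj).1,
    sum_le_sum fun j hj => mul_le_of_le_one_right (hw j hj) (hx j hj).2⟩

/-- The SIS update of one coordinate is a convex-type combination: it equals
`x (1 - h d) + h (1 - x) s`, and `1` minus it equals `(1 - x) (1 - h s) + h d x`. -/
lemma sis_update_mem_unitInterval {h d b s x : ℝ} (hh : 0 ≤ h) (hd : 0 ≤ d)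
    (hhd : h * d ≤ 1) (hhb : h * b ≤ 1) (hs : s ∈ Icc 0 b) (hx : x ∈ Icc (0 : ℝ) 1) :
    x + h * (1 - x) * s - h * d * x ∈ Icc (0 : ℝ) 1 := by
  obtain ⟨hs0, hsb⟩ := hs
  obtain ⟨hx0, hx1⟩ := hx
  have hhs : h * s ≤ 1 := (mul_le_mul_of_nonneg_left hsb hh).trans hhb
  constructor
  · calc (0 : ℝ) ≤ x * (1 - h * d) + h * (1 - x) * s := by
          have := sub_nonneg.mpr hx1
          have := sub_nonneg.mpr hhd
          positivity
      _ = _ := by ring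
  · suffices 0 ≤ (1 - x) * (1 - h * s) + h * d * x by linarith
    have := sub_nonneg.mpr hx1
    have := sub_nonneg.mpr hhs
    positivity

theorem stmt0 (n : ℕ) (h : ℝ) (β : Fin n → Fin n → ℝ) (δ : Fin n → ℝ)
    (x : ℕ → Fin n → ℝ)
    (hh : 0 < h)
    (hβ : ∀ i j, 0 ≤ β i j) (hδ : ∀ i, 0 ≤ δ i)
    (hδ1 : ∀ i, h * δ i ≤ 1) (hβ1 : ∀ i, h * ∑ j, β i j < 1)
    (hx1 : ∀ i, 0 ≤ x 1 i ∧ x 1 i ≤ 1)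
    (hdyn : ∀ k, 1 ≤ k → ∀ i,
      x (k+1) i = x k i + h * (1 - x k i) * (∑ j, β i j * x k j) - h * δ i * x k i) :
    ∀ k, 1 ≤ k → ∀ i, 0 ≤ x k i ∧ x k i ≤ 1 := by
  intro k hk
  induction k, hk using Nat.le_induction with
  | base => exact hx1
  | succ k hk ih =>
    intro i
    rw [hdyn k hk i]
    exact sis_update_mem_unitInterval hh.le (hδ i) (hδ1 i) (hβ1 i).le
      (sum_mul_mem_Icc_of_mem_unitInterval _ (fun j _ => hβ i j) (fun j _ => ih j)) (ih i)
end

section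
/- Let x^k evolve by the nonlinear dynamics x_i^{k+1} = x_i^k + h(1 - x_i^k)·∑_j β_{ij} x_j^k - h·δ_i x_i^k with x_i^k ∈ [0,1], and let y^k evolve by the linear dynamics y^{k+1} = A y^k where A_{ii} = 1 - h·δ_i ≥ 0 and A_{ij} = h·β_{ij} ≥ 0 for i ≠ j. If y^1 = x^1 (entrywise, with entries in [0,1]), then x_i^k ≤ y_i^k for all i and all k, provided x_i^k remains in [0,1] for all k. -/
/-!
The nonlinear SIS step differs from its linearization only by the infection term
`-h xᵢ ∑ⱼ βᵢⱼ xⱼ`, which is nonpositive on the nonnegative orthant, so each nonlinear step lies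
below the linear one. The linear map has a nonnegative matrix and is therefore monotone, and the
comparison principle for monotone maps propagates the inequality from the common initial state.
-/

open Matrix

theorem Matrix.monotone_mulVec_of_nonneg {R m n : Type*} [Semiring R] [PartialOrder R]
    [IsOrderedRing R] [Fintype n] {A : Matrix m n R} (hA : ∀ i j, 0 ≤ A i j) :
    Monotone A.mulVec :=
  fun _ _ huv i => dotProduct_le_dotProduct_of_nonneg_left huv (hA i)

section SIS

variable {n : ℕ} {h : ℝ} {β : Fin n → Fin n → ℝ} {δ : Fin n → ℝ} {A : Matrix (Fin n) (Fin n) ℝ}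

theorem sis_linearization_eq (hβii : ∀ i, β i i = 0) (hAdiag : ∀ i, A i i = 1 - h * δ i)
    (hAoff : ∀ i j, i ≠ j → A i j = h * β i j) :
    A = diagonal (fun i => 1 - h * δ i) + h • of β := by
  ext i j
  rcases eq_or_ne i j with rfl | hij
  · simp [hAdiag, hβii]
  · simp [hAoff i j hij, hij]

theorem sis_linearization_mulVec_apply (hβii : ∀ i, β i i = 0)
    (hAdiag : ∀ i, A i i = 1 - h * δ i) (hAoff : ∀ i j, i ≠ j → A i j = h * β i j)
    (v : Fin n → ℝ) (i : Fin n) :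
    (A *ᵥ v) i = (1 - h * δ i) * v i + h * ∑ j, β i j * v j := by
  rw [sis_linearization_eq hβii hAdiag hAoff, add_mulVec, smul_mulVec, Pi.add_apply,
    Pi.smul_apply, mulVec_diagonal]
  simp [mulVec, dotProduct]

theorem sis_step_le_linearized_step (hh : 0 ≤ h) (hβ : ∀ i j, 0 ≤ β i j) {v : Fin n → ℝ}
    (hv : 0 ≤ v) (i : Fin n) :
    v i + h * (1 - v i) * (∑ j, β i j * v j) - h * δ i * v i
      ≤ (1 - h * δ i) * v i + h * ∑ j, β i j * v j := by
  have hS : 0 ≤ ∑ j, β i j * v j := Finset.sum_nonneg fun j _ => mul_nonneg (hβ i j) (hv j)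
  nlinarith [mul_nonneg (mul_nonneg hh (hv i)) hS]

end SIS

theorem stmt2_general (n : ℕ) (h : ℝ) (β : Fin n → Fin n → ℝ) (δ : Fin n → ℝ)
    (A : Matrix (Fin n) (Fin n) ℝ)
    (x y : ℕ → Fin n → ℝ)
    (hh : 0 < h)
    (hβ : ∀ i j, i ≠ j → 0 ≤ β i j) (hβii : ∀ i, β i i = 0)
    (hAdiag : ∀ i, A i i = 1 - h * δ i) (hAdnn : ∀ i, 0 ≤ 1 - h * δ i)
    (hAoff : ∀ i j, i ≠ j → A i j = h * β i j)
    (hbox : ∀ k i, 0 ≤ x k i ∧ x k i ≤ 1)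
    (hxdyn : ∀ k, ∀ i,
      x (k+1) i = x k i + h * (1 - x k i) * (∑ j, β i j * x k j) - h * δ i * x k i)
    (hydyn : ∀ k, y (k+1) = A.mulVec (y k))
    (hinit : y 1 = x 1) :
    ∀ k, 1 ≤ k → ∀ i, x k i ≤ y k i := by
  have hβnn : ∀ i j, 0 ≤ β i j := fun i j => by
    rcases eq_or_ne i j with rfl | hij
    exacts [(hβii i).ge, hβ i j hij]
  have hAnn : ∀ i j, 0 ≤ A i j := fun i j => by
    rcases eq_or_ne i j with rfl | hij
    · exact (hAdiag i).symm ▸ hAdnn i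
    · exact (hAoff i j hij).symm ▸ mul_nonneg hh.le (hβ i j hij)
  have hxstep : ∀ k, x (k + 1) ≤ A *ᵥ x k := fun k i => by
    rw [hxdyn, sis_linearization_mulVec_apply hβii hAdiag hAoff]
    exact sis_step_le_linearized_step hh.le hβnn (fun j => (hbox k j).1) i
  intro k hk
  obtain ⟨m, rfl⟩ : ∃ m, k = m + 1 := ⟨k - 1, by omega⟩
  exact (monotone_mulVec_of_nonneg hAnn).seq_le_seq (x := fun m => x (m + 1))
    (y := fun m => y (m + 1)) m hinit.ge (fun m _ => hxstep (m + 1))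
    (fun m _ => (hydyn (m + 1)).ge)

theorem stmt2 (n : ℕ) (h : ℝ) (β : Fin n → Fin n → ℝ) (δ : Fin n → ℝ)
    (A : Matrix (Fin n) (Fin n) ℝ)
    (x y : ℕ → Fin n → ℝ)
    (hh : 0 < h)
    (hβ : ∀ i j, i ≠ j → 0 ≤ β i j) (hβii : ∀ i, β i i = 0)
    (hδ : ∀ i, 0 ≤ δ i)
    (hAdiag : ∀ i, A i i = 1 - h * δ i) (hAdnn : ∀ i, 0 ≤ 1 - h * δ i)
    (hAoff : ∀ i j, i ≠ j → A i j = h * β i j)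
    (hbox : ∀ k i, 0 ≤ x k i ∧ x k i ≤ 1)
    (hxdyn : ∀ k, ∀ i,
      x (k+1) i = x k i + h * (1 - x k i) * (∑ j, β i j * x k j) - h * δ i * x k i)
    (hydyn : ∀ k, y (k+1) = A.mulVec (y k))
    (hinit : y 1 = x 1) :
    ∀ k, 1 ≤ k → ∀ i, x k i ≤ y k i :=
  stmt2_general n h β δ A x y hh hβ hβii hAdiag hAdnn hAoff hbox hxdyn hydyn hinit
end

section
/- Suppose A^1, ..., A^K are n×n matrices with nonnegative entries, C ∈ ℝ^n is a nonnegative row vector, α ∈ (0,1], and p^1, ..., p^K are nonnegative row vectors satisfying p^k ≥ C + α·p^{k+1}·A^k (entrywise) for k = 1, ..., K−1 and p^K ≥ C + α·p^K·A^K. Let x^{k+1} = A^k x^k for k < K and x^{k+1} = A^K x^k for k ≥ K, with x^1 entrywise nonnegative. Then p^1 · x^1 ≥ ∑_{k=1}^∞ α^k · C · x^k (in particular the series converges and is bounded by p^1 x^1, assuming α ≤ 1 and using p^K x^L ≥ 0). -/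
open Matrix Finset

/-!
Each certificate inequality `p^k ≥ C + α p^{k+1} A^k`, paired with the nonnegative state `x^k`,
gives `p^k x^k ≥ C x^k + α p^{k+1} x^{k+1}`. Telescoping with weights `α^k` bounds every partial
sum of the discounted cost by `p^1 x^1` minus the nonnegative remainder `α^m p^{m+1} x^{m+1}`.
-/

namespace PositiveSystem

variable {n : Type*} [Fintype n] {B : ℕ → Matrix n n ℝ} {y : ℕ → n → ℝ}

lemma mulVec_nonneg {M : Matrix n n ℝ} {v : n → ℝ} (hM : ∀ i j, 0 ≤ M i j) (hv : 0 ≤ v) :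
    0 ≤ M *ᵥ v :=
  fun i => dotProduct_nonneg_of_nonneg (hM i) hv

lemma trajectory_nonneg (hB : ∀ k i j, 0 ≤ B k i j) (hy : ∀ k, y (k + 1) = B k *ᵥ y k)
    (hy0 : 0 ≤ y 0) : ∀ k, 0 ≤ y k
  | 0 => hy0
  | k + 1 => hy k ▸ mulVec_nonneg (hB k) (trajectory_nonneg hB hy hy0 k)

variable {C : n → ℝ} {α : ℝ} {P : ℕ → n → ℝ}

lemma certificate_step (hP : ∀ k, C + α • vecMul (P (k + 1)) (B k) ≤ P k)
    (hy : ∀ k, y (k + 1) = B k *ᵥ y k) (hyk : ∀ k, 0 ≤ y k) (k : ℕ) :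
    C ⬝ᵥ y k + α * (P (k + 1) ⬝ᵥ y (k + 1)) ≤ P k ⬝ᵥ y k := by
  calc C ⬝ᵥ y k + α * (P (k + 1) ⬝ᵥ y (k + 1))
      = (C + α • vecMul (P (k + 1)) (B k)) ⬝ᵥ y k := by
        rw [hy, dotProduct_mulVec, add_dotProduct, smul_dotProduct, smul_eq_mul]
    _ ≤ P k ⬝ᵥ y k := dotProduct_le_dotProduct_of_nonneg_right (hP k) (hyk k)

lemma sum_discounted_cost_add_remainder_le (hα : 0 ≤ α)
    (hP : ∀ k, C + α • vecMul (P (k + 1)) (B k) ≤ P k)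
    (hy : ∀ k, y (k + 1) = B k *ᵥ y k) (hyk : ∀ k, 0 ≤ y k) (m : ℕ) :
    ∑ k ∈ range m, α ^ k * (C ⬝ᵥ y k) + α ^ m * (P m ⬝ᵥ y m) ≤ P 0 ⬝ᵥ y 0 := by
  induction m with
  | zero => simp
  | succ m ih =>
    have step := mul_le_mul_of_nonneg_left (certificate_step hP hy hyk m) (pow_nonneg hα m)
    rw [mul_add, ← mul_assoc, ← pow_succ] at step
    rw [sum_range_succ]
    linarith

theorem discounted_cost_le_certificate (hB : ∀ k i j, 0 ≤ B k i j) (hC : 0 ≤ C) (hα : 0 ≤ α)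
    (hPnn : ∀ k, 0 ≤ P k) (hP : ∀ k, C + α • vecMul (P (k + 1)) (B k) ≤ P k)
    (hy : ∀ k, y (k + 1) = B k *ᵥ y k) (hy0 : 0 ≤ y 0) :
    Summable (fun k => α ^ k * (C ⬝ᵥ y k)) ∧ ∑' k, α ^ k * (C ⬝ᵥ y k) ≤ P 0 ⬝ᵥ y 0 := by
  have hyk := trajectory_nonneg hB hy hy0
  have hterm : ∀ k, 0 ≤ α ^ k * (C ⬝ᵥ y k) :=
    fun k => mul_nonneg (pow_nonneg hα k) (dotProduct_nonneg_of_nonneg hC (hyk k))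
  have hpartial : ∀ m, ∑ k ∈ range m, α ^ k * (C ⬝ᵥ y k) ≤ P 0 ⬝ᵥ y 0 := fun m => by
    have hrem := mul_nonneg (pow_nonneg hα m) (dotProduct_nonneg_of_nonneg (hPnn m) (hyk m))
    linarith [sum_discounted_cost_add_remainder_le hα hP hy hyk m]
  exact ⟨summable_of_sum_range_le hterm hpartial, Real.tsum_le_of_sum_range_le hterm hpartial⟩

end PositiveSystem

open PositiveSystem in
theorem stmt3 (n K : ℕ) (hK : 1 ≤ K)
    (A : ℕ → Matrix (Fin n) (Fin n) ℝ)
    (C : Fin n → ℝ) (α : ℝ) (p : ℕ → Fin n → ℝ) (x : ℕ → Fin n → ℝ)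
    (hA : ∀ k i j, 0 ≤ A k i j) (hC : ∀ i, 0 ≤ C i)
    (hα0 : 0 < α) (hα1 : α ≤ 1)
    (hp : ∀ k i, 0 ≤ p k i)
    (hpk : ∀ k, 1 ≤ k → k < K → ∀ j, C j + α * Matrix.vecMul (p (k+1)) (A k) j ≤ p k j)
    (hpK : ∀ j, C j + α * Matrix.vecMul (p K) (A K) j ≤ p K j)
    (hx1 : ∀ i, 0 ≤ x 1 i)
    (hxdynlt : ∀ k, 1 ≤ k → k < K → x (k+1) = (A k).mulVec (x k))
    (hxdynge : ∀ k, K ≤ k → x (k+1) = (A K).mulVec (x k)) :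
    Summable (fun k : ℕ => α ^ (k+1) * (C ⬝ᵥ x (k+1))) ∧
      ∑' k : ℕ, α ^ (k+1) * (C ⬝ᵥ x (k+1)) ≤ p 1 ⬝ᵥ x 1 := by
  -- Shift time by one and freeze both the matrices and the certificates at stage `K`.
  have hcert :
      ∀ k, C + α • vecMul (p (min (k + 2) K)) (A (min (k + 1) K)) ≤ p (min (k + 1) K) := by
    intro k j
    rcases lt_or_ge (k + 1) K with hlt | hge
    · rw [show min (k + 2) K = k + 2 by omega, min_eq_left hlt.le]
      exact hpk (k + 1) (by omega) hlt j
    · rw [show min (k + 2) K = K by omega, min_eq_right hge]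
      exact hpK j
  have hdyn : ∀ k, x (k + 2) = A (min (k + 1) K) *ᵥ x (k + 1) := by
    intro k
    rcases lt_or_ge (k + 1) K with hlt | hge
    · rw [min_eq_left hlt.le]; exact hxdynlt (k + 1) (by omega) hlt
    · rw [min_eq_right hge]; exact hxdynge (k + 1) hge
  obtain ⟨hsum, hle⟩ := discounted_cost_le_certificate (B := fun k => A (min (k + 1) K))
    (P := fun k => p (min (k + 1) K)) (y := fun k => x (k + 1))
    (fun _ => hA _) hC hα0.le (fun _ => hp _) hcert hdyn hx1
  simp only [zero_add, min_eq_left hK] at hle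
  have hxnn := trajectory_nonneg (y := fun k => x (k + 1)) (fun _ => hA _) hdyn hx1
  have hnonneg : 0 ≤ ∑' k, α ^ k * (C ⬝ᵥ x (k + 1)) :=
    tsum_nonneg fun k => mul_nonneg (pow_nonneg hα0.le k) (dotProduct_nonneg_of_nonneg hC (hxnn k))
  simp only [pow_succ', mul_assoc]
  refine ⟨hsum.mul_left α, ?_⟩
  rw [tsum_mul_left]
  exact (mul_le_of_le_one_left hnonneg hα1).trans hle
end

section
/- Let A be an n×n matrix with nonnegative entries, C a nonnegative row vector, α ∈ (0,1], and p a nonnegative row vector with p ≥ C + α·p·A entrywise. Then for every nonnegative x ∈ ℝ^n, the partial sums ∑_{k=1}^L α^k C A^{k-1} x are bounded above by p·x for all L, and hence ∑_{k=1}^∞ α^k C A^{k-1} x ≤ p·x. -/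
/-! Put `v k = A ^ k x ≥ 0`. Pairing `p ≥ C + α p A` with `v k` gives
`C v k + α (p v (k+1)) ≤ p v k`; weighting this by `α ^ (k+1)` makes the sum telescope to
`∑_{k<L} α^(k+1) C v k + α^(L+1) p v L ≤ α p x ≤ p x`. -/

open Matrix

section OrderedSemiring

variable {R : Type*} [CommSemiring R] [PartialOrder R] [IsOrderedRing R]

theorem Matrix.mulVec_nonneg_of_nonneg {m n : Type*} [Fintype n] {M : Matrix m n R}
    (hM : ∀ i j, 0 ≤ M i j) {v : n → R} (hv : 0 ≤ v) : 0 ≤ M *ᵥ v :=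
  fun i => dotProduct_nonneg_of_nonneg (hM i) hv

theorem Matrix.pow_mulVec_nonneg_of_nonneg {n : Type*} [Fintype n] [DecidableEq n]
    {M : Matrix n n R} (hM : ∀ i j, 0 ≤ M i j) {v : n → R} (hv : 0 ≤ v) (k : ℕ) :
    0 ≤ (M ^ k) *ᵥ v := by
  induction k with
  | zero => simpa using hv
  | succ k ih =>
    rw [pow_succ', ← mulVec_mulVec]
    exact mulVec_nonneg_of_nonneg hM ih

theorem Matrix.dotProduct_add_mul_dotProduct_mulVec_le {n : Type*} [Fintype n]
    {A : Matrix n n R} {C p v : n → R} {α : R} (hineq : C + α • vecMul p A ≤ p) (hv : 0 ≤ v) :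
    C ⬝ᵥ v + α * (p ⬝ᵥ A *ᵥ v) ≤ p ⬝ᵥ v := by
  rw [dotProduct_mulVec, ← smul_eq_mul, ← smul_dotProduct, ← add_dotProduct]
  exact dotProduct_le_dotProduct_of_nonneg_right hineq hv

theorem sum_range_pow_succ_mul_add_le {α : R} (hα : 0 ≤ α) {c q : ℕ → R}
    (h : ∀ k, c k + α * q (k + 1) ≤ q k) (L : ℕ) :
    ∑ k ∈ Finset.range L, α ^ (k + 1) * c k + α ^ (L + 1) * q L ≤ α * q 0 := by
  induction L with
  | zero => simp
  | succ L ih =>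
    calc ∑ k ∈ Finset.range (L + 1), α ^ (k + 1) * c k + α ^ (L + 1 + 1) * q (L + 1)
        = ∑ k ∈ Finset.range L, α ^ (k + 1) * c k
            + α ^ (L + 1) * (c L + α * q (L + 1)) := by
          rw [Finset.sum_range_succ]; ring
      _ ≤ ∑ k ∈ Finset.range L, α ^ (k + 1) * c k + α ^ (L + 1) * q L := by
          gcongr; exact h L
      _ ≤ α * q 0 := ih

end OrderedSemiring

theorem Real.tsum_le_of_sum_range_le_of_nonneg {f : ℕ → ℝ} {c : ℝ} (hc : 0 ≤ c)
    (h : ∀ L, ∑ k ∈ Finset.range L, f k ≤ c) : ∑' k, f k ≤ c := by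
  by_cases hf : Summable f
  · exact hf.tsum_le_of_sum_range_le h
  · rwa [tsum_eq_zero_of_not_summable hf]

theorem stmt4_general (n : ℕ) (A : Matrix (Fin n) (Fin n) ℝ) (C p x : Fin n → ℝ) (α : ℝ)
    (hA : ∀ i j, 0 ≤ A i j) (hp : ∀ i, 0 ≤ p i) (hx : ∀ i, 0 ≤ x i)
    (hα0 : 0 < α) (hα1 : α ≤ 1)
    (hineq : ∀ j, C j + α * Matrix.vecMul p A j ≤ p j) :
    (∀ L : ℕ, ∑ k ∈ Finset.range L, α ^ (k+1) * (C ⬝ᵥ (A ^ k).mulVec x) ≤ p ⬝ᵥ x) ∧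
      ∑' k : ℕ, α ^ (k+1) * (C ⬝ᵥ (A ^ k).mulVec x) ≤ p ⬝ᵥ x := by
  have hv : ∀ k, 0 ≤ (A ^ k) *ᵥ x := pow_mulVec_nonneg_of_nonneg hA hx
  have hstep : ∀ k, C ⬝ᵥ (A ^ k) *ᵥ x + α * (p ⬝ᵥ (A ^ (k + 1)) *ᵥ x) ≤ p ⬝ᵥ (A ^ k) *ᵥ x := by
    intro k
    rw [pow_succ', ← mulVec_mulVec]
    exact dotProduct_add_mul_dotProduct_mulVec_le hineq (hv k)
  have hpx : 0 ≤ p ⬝ᵥ x := dotProduct_nonneg_of_nonneg hp hx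
  have hpartial : ∀ L : ℕ,
      ∑ k ∈ Finset.range L, α ^ (k+1) * (C ⬝ᵥ (A ^ k).mulVec x) ≤ p ⬝ᵥ x := by
    intro L
    have htele := sum_range_pow_succ_mul_add_le (c := fun k => C ⬝ᵥ (A ^ k) *ᵥ x)
      (q := fun k => p ⬝ᵥ (A ^ k) *ᵥ x) hα0.le hstep L
    simp only [pow_zero, one_mulVec] at htele
    have hrem : 0 ≤ α ^ (L + 1) * (p ⬝ᵥ (A ^ L) *ᵥ x) :=
      mul_nonneg (pow_nonneg hα0.le _) (dotProduct_nonneg_of_nonneg hp (hv L))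
    calc ∑ k ∈ Finset.range L, α ^ (k+1) * (C ⬝ᵥ (A ^ k).mulVec x)
        ≤ α * (p ⬝ᵥ x) := by linarith
      _ ≤ p ⬝ᵥ x := mul_le_of_le_one_left hpx hα1
  exact ⟨hpartial, Real.tsum_le_of_sum_range_le_of_nonneg hpx hpartial⟩

theorem stmt4 (n : ℕ) (A : Matrix (Fin n) (Fin n) ℝ) (C p x : Fin n → ℝ) (α : ℝ)
    (hA : ∀ i j, 0 ≤ A i j) (hC : ∀ i, 0 ≤ C i) (hp : ∀ i, 0 ≤ p i) (hx : ∀ i, 0 ≤ x i)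
    (hα0 : 0 < α) (hα1 : α ≤ 1)
    (hineq : ∀ j, C j + α * Matrix.vecMul p A j ≤ p j) :
    (∀ L : ℕ, ∑ k ∈ Finset.range L, α ^ (k+1) * (C ⬝ᵥ (A ^ k).mulVec x) ≤ p ⬝ᵥ x) ∧
      ∑' k : ℕ, α ^ (k+1) * (C ⬝ᵥ (A ^ k).mulVec x) ≤ p ⬝ᵥ x :=
  stmt4_general n A C p x α hA hp hx hα0 hα1 hineq
end
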